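/- Let T ⊆ ℝⁿ be a closed brick and f : T → ℝ a K-integrable function. Then the set of discontinuity points of f can be covered by the union of a Jordan null set H and countably many hyperplanes of the form {x ∈ ℝⁿ : xⱼ = c} (1 ≤ j ≤ n, c ∈ ℝ). In particular, f is continuous Lebesgue almost everywhere. -/

import Mathlib

open Set Filter MeasureTheory Topology

/-- A brick in ℝⁿ: a product of `n` bounded intervals. -/
def IsBrick {n : ℕ} (S : Set (Fin n → ℝ)) : Prop :=
  ∃ I : Fin n → Set ℝ,
    (∀ k, (I k).OrdConnected ∧ Bornology.IsBounded (I k)) ∧ S = Set.univ.pi I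

/-- The volume of a brick: the product of the lengths of its sides. -/
noncomputable def brickVol {n : ℕ} (S : Set (Fin n → ℝ)) : ℝ :=
  ∏ k : Fin n, (sSup ((fun x => x k) '' S) - sInf ((fun x => x k) '' S))

/-- A representation of a step function on `T`: a finite linear combination of
characteristic functions of bricks contained in `T`. -/
structure StepRepr {n : ℕ} (T : Set (Fin n → ℝ)) where
  M : ℕ
  c : Fin M → ℝ
  B : Fin M → Set (Fin n → ℝ)
  isBrick : ∀ j, IsBrick (B j)
  subset : ∀ j, B j ⊆ T

/-- The step function determined by a representation. -/
noncomputable def StepRepr.fn {n : ℕ} {T : Set (Fin n → ℝ)} (g : StepRepr T) :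
    (Fin n → ℝ) → ℝ :=
  fun x => ∑ j, g.c j * (g.B j).indicator (fun _ => (1 : ℝ)) x

/-- The integral of a step function. -/
noncomputable def StepRepr.integral {n : ℕ} {T : Set (Fin n → ℝ)} (g : StepRepr T) : ℝ :=
  ∑ j, g.c j * brickVol (g.B j)

/-- The sequence `F` converges nearly uniformly to `f` on `T`: it is uniformly bounded
on `T`, and for every `δ > 0` there are finitely many bricks (contained in `T`) of total
volume `< δ` such that `F` converges uniformly to `f` on the complement of their union. -/
def NearlyUniformlyTo {n : ℕ} (T : Set (Fin n → ℝ)) (F : ℕ → (Fin n → ℝ) → ℝ)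
    (f : (Fin n → ℝ) → ℝ) : Prop :=
  (∃ C : ℝ, ∀ m, ∀ x ∈ T, |F m x| ≤ C) ∧
  ∀ δ > (0 : ℝ), ∃ (M : ℕ) (B : Fin M → Set (Fin n → ℝ)),
    (∀ j, IsBrick (B j) ∧ B j ⊆ T) ∧ (∑ j, brickVol (B j)) < δ ∧
    TendstoUniformlyOn F f atTop (T \ ⋃ j, B j)

/-- `f` is K-integrable on `T`: some sequence of step functions converges nearly
uniformly to `f`. -/
def KIntegrable {n : ℕ} (T : Set (Fin n → ℝ)) (f : (Fin n → ℝ) → ℝ) : Prop :=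
  ∃ g : ℕ → StepRepr T, NearlyUniformlyTo T (fun m => (g m).fn) f

/-- `f` is K-integrable on `T` with K-integral `I`: some sequence of step functions
converges nearly uniformly to `f` and their integrals tend to `I`. -/
def HasKIntegral {n : ℕ} (T : Set (Fin n → ℝ)) (f : (Fin n → ℝ) → ℝ) (I : ℝ) : Prop :=
  ∃ g : ℕ → StepRepr T, NearlyUniformlyTo T (fun m => (g m).fn) f ∧
    Filter.Tendsto (fun m => (g m).integral) Filter.atTop (nhds I)

/-- A Jordan null set: for each `ε > 0` it can be covered by finitely many bricks of
total volume less than `ε`. -/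
def JordanNull {n : ℕ} (A : Set (Fin n → ℝ)) : Prop :=
  ∀ ε > (0 : ℝ), ∃ (M : ℕ) (B : Fin M → Set (Fin n → ℝ)),
    (∀ j, IsBrick (B j)) ∧ A ⊆ (⋃ j, B j) ∧ (∑ j, brickVol (B j)) < ε



/-- Around a point avoiding the face-hyperplanes of a brick, the brick is locally
either everything or nothing. -/
lemma brick_loc {n : ℕ} {B : Set (Fin n → ℝ)} (hB : IsBrick B) (x : Fin n → ℝ)
    (hx : ∀ i, x i ≠ sInf ((fun y => y i) '' B) ∧ x i ≠ sSup ((fun y => y i) '' B)) :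
    ∃ U : Set (Fin n → ℝ), IsOpen U ∧ x ∈ U ∧ (U ⊆ B ∨ U ∩ B = ∅) := by
  obtain ⟨I, hI, rfl⟩ := hB
  by_cases hne : (Set.univ.pi I).Nonempty
  · have himg : ∀ i, (fun y : Fin n → ℝ => y i) '' Set.univ.pi I = I i :=
      fun i => Set.eval_image_univ_pi hne
    have hIne : ∀ i, (I i).Nonempty := by
      intro i; rw [← himg i]; exact hne.image _
    have hbddA : ∀ i, BddAbove (I i) := fun i => (hI i).2.bddAbove
    have hbddB : ∀ i, BddBelow (I i) := fun i => (hI i).2.bddBelow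
    have hIoo : ∀ i, Set.Ioo (sInf (I i)) (sSup (I i)) ⊆ I i := by
      intro i y hy
      obtain ⟨p, hp, hpy⟩ := exists_lt_of_csInf_lt (hIne i) hy.1
      obtain ⟨q, hq, hyq⟩ := exists_lt_of_lt_csSup (hIne i) hy.2
      exact (hI i).1.out hp hq ⟨hpy.le, hyq.le⟩
    have hx' : ∀ i, x i ≠ sInf (I i) ∧ x i ≠ sSup (I i) := by
      intro i; have := hx i; rwa [himg i] at this
    by_cases hxB : x ∈ Set.univ.pi I
    · refine ⟨Set.univ.pi (fun i => Set.Ioo (sInf (I i)) (sSup (I i))),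
        isOpen_set_pi Set.finite_univ (fun i _ => isOpen_Ioo), ?_, Or.inl ?_⟩
      · intro i _
        have h1 : sInf (I i) ≤ x i := csInf_le (hbddB i) (hxB i trivial)
        have h2 : x i ≤ sSup (I i) := le_csSup (hbddA i) (hxB i trivial)
        exact ⟨h1.lt_of_ne (Ne.symm (hx' i).1), h2.lt_of_ne (hx' i).2⟩
      · intro y hy i _
        exact hIoo i (hy i trivial)
    · have : ∃ i, x i ∉ I i := by
        by_contra h
        push_neg at h
        exact hxB (fun i _ => h i)
      obtain ⟨i, hxi⟩ := this
      have hcase : x i < sInf (I i) ∨ sSup (I i) < x i := by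
        by_contra h
        push_neg at h
        exact hxi (hIoo i ⟨h.1.lt_of_ne (Ne.symm (hx' i).1), h.2.lt_of_ne (hx' i).2⟩)
      rcases hcase with h | h
      · refine ⟨{y | y i < sInf (I i)}, isOpen_lt (continuous_apply i) continuous_const,
          h, Or.inr ?_⟩
        apply Set.eq_empty_iff_forall_notMem.mpr
        rintro y ⟨hy1, hy2⟩
        exact absurd (csInf_le (hbddB i) (hy2 i trivial)) (not_le.mpr hy1)
      · refine ⟨{y | sSup (I i) < y i}, isOpen_lt continuous_const (continuous_apply i),
          h, Or.inr ?_⟩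
        apply Set.eq_empty_iff_forall_notMem.mpr
        rintro y ⟨hy1, hy2⟩
        exact absurd (le_csSup (hbddA i) (hy2 i trivial)) (not_le.mpr hy1)
  · refine ⟨Set.univ, isOpen_univ, trivial, Or.inr ?_⟩
    rw [Set.not_nonempty_iff_eq_empty.mp hne, Set.inter_empty]

lemma brick_indicator_continuousAt {n : ℕ} {B : Set (Fin n → ℝ)} (hB : IsBrick B)
    (x : Fin n → ℝ)
    (hx : ∀ i, x i ≠ sInf ((fun y => y i) '' B) ∧ x i ≠ sSup ((fun y => y i) '' B)) :
    ContinuousAt (B.indicator (fun _ => (1 : ℝ))) x := by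
  obtain ⟨U, hUo, hxU, hU⟩ := brick_loc hB x hx
  rcases hU with h | h
  · refine Filter.EventuallyEq.continuousAt (y := (1 : ℝ)) ?_
    filter_upwards [hUo.mem_nhds hxU] with y hy
    exact Set.indicator_of_mem (h hy) _
  · refine Filter.EventuallyEq.continuousAt (y := (0 : ℝ)) ?_
    filter_upwards [hUo.mem_nhds hxU] with y hy
    refine Set.indicator_of_notMem (fun hyB => ?_) _
    exact Set.eq_empty_iff_forall_notMem.mp h y ⟨hy, hyB⟩

lemma brickVol_nonneg {n : ℕ} {B : Set (Fin n → ℝ)} (hB : IsBrick B) :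
    0 ≤ brickVol B := by
  refine Finset.prod_nonneg fun i _ => sub_nonneg.mpr ?_
  rcases Set.eq_empty_or_nonempty B with rfl | hne
  · simp [Real.sSup_empty, Real.sInf_empty]
  obtain ⟨I, hI, rfl⟩ := hB
  have himg : (fun y : Fin n → ℝ => y i) '' Set.univ.pi I = I i :=
    Set.eval_image_univ_pi hne
  rw [himg]
  exact csInf_le_csSup (by rw [← himg]; exact hne.image _) (hI i).2.bddBelow (hI i).2.bddAbove

lemma brick_volume_le {n : ℕ} {B : Set (Fin n → ℝ)} (hB : IsBrick B) :
    volume B ≤ ENNReal.ofReal (brickVol B) := by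
  rcases Set.eq_empty_or_nonempty B with rfl | hne
  · simp
  obtain ⟨I, hI, rfl⟩ := hB
  have himg : ∀ i, (fun y : Fin n → ℝ => y i) '' Set.univ.pi I = I i :=
    fun i => Set.eval_image_univ_pi hne
  have hIne : ∀ i, (I i).Nonempty := by
    intro i; rw [← himg i]; exact hne.image _
  have hsub : Set.univ.pi I ⊆ Set.univ.pi (fun i => Set.Icc (sInf (I i)) (sSup (I i))) := by
    intro y hy i _
    exact ⟨csInf_le (hI i).2.bddBelow (hy i trivial), le_csSup (hI i).2.bddAbove (hy i trivial)⟩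
  have hnn : ∀ i, 0 ≤ sSup (I i) - sInf (I i) := fun i =>
    sub_nonneg.mpr (csInf_le_csSup (hIne i) (hI i).2.bddBelow (hI i).2.bddAbove)
  calc volume (Set.univ.pi I)
      ≤ volume (Set.univ.pi (fun i => Set.Icc (sInf (I i)) (sSup (I i)))) :=
        measure_mono hsub
    _ = ∏ i, volume (Set.Icc (sInf (I i)) (sSup (I i))) := volume_pi_pi _
    _ = ∏ i, ENNReal.ofReal (sSup (I i) - sInf (I i)) := by simp [Real.volume_Icc]
    _ = ENNReal.ofReal (∏ i, (sSup (I i) - sInf (I i))) :=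
        (ENNReal.ofReal_prod_of_nonneg (fun i _ => hnn i)).symm
    _ = ENNReal.ofReal (brickVol (Set.univ.pi I)) := by
        unfold brickVol
        congr 1
        exact Finset.prod_congr rfl fun i _ => by rw [himg i]

lemma volume_hyperplane {n : ℕ} (i : Fin n) (c : ℝ) :
    volume {x : Fin n → ℝ | x i = c} = 0 := by
  have h : {x : Fin n → ℝ | x i = c} =
      Set.univ.pi (fun k => if k = i then {c} else Set.univ) := by
    ext x
    simp only [Set.mem_setOf_eq, Set.mem_pi, Set.mem_univ, forall_true_left]
    constructor
    · intro hx k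
      split_ifs with hk
      · subst hk; simpa using hx
      · trivial
    · intro hx
      have := hx i
      simpa using this
  rw [h, volume_pi_pi]
  refine Finset.prod_eq_zero (Finset.mem_univ i) ?_
  simp

lemma unif_cwa {α : Type*} [TopologicalSpace α] {F : ℕ → α → ℝ} {f : α → ℝ}
    {s : Set α} {x : α} (h : TendstoUniformlyOn F f atTop s) (hx : x ∈ s)
    (hc : ∀ m, ContinuousWithinAt (F m) s x) : ContinuousWithinAt f s x := by
  apply continuousWithinAt_of_locally_uniform_approx_of_continuousWithinAt hx
  intro u hu
  obtain ⟨m, hm⟩ := (h u hu).exists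
  exact ⟨s, self_mem_nhdsWithin, F m, hc m, hm⟩


/-- The discontinuity points of a K-integrable function on a closed brick `T = [a, b]`
can be covered by the union of a Jordan null set and countably many hyperplanes
orthogonal to the coordinate axes; in particular, a K-integrable function is continuous
Lebesgue almost everywhere. -/
theorem discontinuities_of_kIntegrable {n : ℕ} (hn : 1 ≤ n) (a b : Fin n → ℝ)
    (f : (Fin n → ℝ) → ℝ) (hf : KIntegrable (Set.Icc a b) f) :
    (∃ (H : Set (Fin n → ℝ)) (c : ℕ → Fin n × ℝ), JordanNull H ∧
      {x | x ∈ Set.Icc a b ∧ ¬ ContinuousWithinAt f (Set.Icc a b) x} ⊆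
        H ∪ ⋃ i : ℕ, {x : Fin n → ℝ | x (c i).1 = (c i).2}) ∧
    ∀ᵐ x ∂(volume : Measure (Fin n → ℝ)),
      x ∈ Set.Icc a b → ContinuousWithinAt f (Set.Icc a b) x := by
  obtain ⟨g, ⟨C, hC⟩, hcov⟩ := hf
  choose M Bk hBk hvol hunif using fun k : ℕ => hcov (1 / ((k : ℝ) + 1)) (by positivity)
  set H : Set (Fin n → ℝ) := ⋂ k, ⋃ j, Bk k j with hH
  set S : Set (Fin n × ℝ) := insert ((⟨0, hn⟩ : Fin n), (0 : ℝ))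
    ((Set.range fun q : ((Σ m : ℕ, Fin ((g m).M)) × Fin n × Bool) =>
        (q.2.1, cond q.2.2 (sInf ((fun y => y q.2.1) '' (g q.1.1).B q.1.2))
                (sSup ((fun y => y q.2.1) '' (g q.1.1).B q.1.2)))) ∪
     (Set.range fun q : ((Σ k : ℕ, Fin (M k)) × Fin n × Bool) =>
        (q.2.1, cond q.2.2 (sInf ((fun y => y q.2.1) '' Bk q.1.1 q.1.2))
                (sSup ((fun y => y q.2.1) '' Bk q.1.1 q.1.2))))) with hSdef
  have hScnt : S.Countable :=
    ((Set.countable_range _).union (Set.countable_range _)).insert _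
  obtain ⟨c, hc⟩ := hScnt.exists_eq_range ⟨_, Set.mem_insert _ _⟩
  have key : ∀ x ∈ Set.Icc a b, x ∉ H → (∀ i : ℕ, x (c i).1 ≠ (c i).2) →
      ContinuousWithinAt f (Set.Icc a b) x := by
    intro x hxT hxH hxc
    have hxS : ∀ p ∈ S, x p.1 ≠ p.2 := by
      intro p hp
      rw [hc] at hp
      obtain ⟨i, rfl⟩ := hp
      exact hxc i
    have hstep : ∀ m, ContinuousAt ((g m).fn) x := by
      intro m
      refine tendsto_finset_sum _ (fun j _ => Tendsto.const_mul _ ?_)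
      refine brick_indicator_continuousAt ((g m).isBrick j) x (fun i => ?_)
      constructor
      · exact hxS _ (Set.mem_insert_of_mem _ (Set.mem_union_left _ ⟨⟨⟨m, j⟩, i, true⟩, rfl⟩))
      · exact hxS _ (Set.mem_insert_of_mem _ (Set.mem_union_left _ ⟨⟨⟨m, j⟩, i, false⟩, rfl⟩))
    obtain ⟨k, hk⟩ : ∃ k, x ∉ ⋃ j, Bk k j := by
      by_contra h
      push_neg at h
      exact hxH (Set.mem_iInter.mpr h)
    have hUj : ∀ j : Fin (M k), ∃ U, IsOpen U ∧ x ∈ U ∧ U ∩ Bk k j = ∅ := by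
      intro j
      obtain ⟨U, hUo, hxU, hU⟩ := brick_loc (hBk k j).1 x (fun i => ⟨
        hxS _ (Set.mem_insert_of_mem _ (Set.mem_union_right _ ⟨⟨⟨k, j⟩, i, true⟩, rfl⟩)),
        hxS _ (Set.mem_insert_of_mem _ (Set.mem_union_right _ ⟨⟨⟨k, j⟩, i, false⟩, rfl⟩))⟩)
      rcases hU with h | h
      · exact absurd (Set.mem_iUnion.mpr ⟨j, h hxU⟩) hk
      · exact ⟨U, hUo, hxU, h⟩
    choose U hUo hxU hUdisj using hUj
    have hVo : IsOpen (⋂ j, U j) := isOpen_iInter_of_finite hUo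
    have hxV : x ∈ ⋂ j, U j := Set.mem_iInter.mpr hxU
    have hVsub : Set.Icc a b ∩ ⋂ j, U j ⊆ Set.Icc a b \ ⋃ j, Bk k j := by
      rintro y ⟨hy1, hy2⟩
      refine ⟨hy1, fun hmem => ?_⟩
      obtain ⟨j, hj⟩ := Set.mem_iUnion.mp hmem
      exact Set.eq_empty_iff_forall_notMem.mp (hUdisj j) y ⟨Set.mem_iInter.mp hy2 j, hj⟩
    have huc : TendstoUniformlyOn (fun m => (g m).fn) f atTop (Set.Icc a b ∩ ⋂ j, U j) :=
      (hunif k).mono hVsub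
    have hcw : ContinuousWithinAt f (Set.Icc a b ∩ ⋂ j, U j) x :=
      unif_cwa huc ⟨hxT, hxV⟩ (fun m => (hstep m).continuousWithinAt)
    exact (continuousWithinAt_inter (hVo.mem_nhds hxV)).mp hcw
  have hsub : {x | x ∈ Set.Icc a b ∧ ¬ ContinuousWithinAt f (Set.Icc a b) x} ⊆
      H ∪ ⋃ i : ℕ, {x : Fin n → ℝ | x (c i).1 = (c i).2} := by
    rintro x ⟨hxT, hxd⟩
    by_contra h
    rw [Set.mem_union] at h
    push_neg at h
    refine hxd (key x hxT h.1 (fun i hi => h.2 (Set.mem_iUnion.mpr ⟨i, hi⟩)))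
  constructor
  · refine ⟨H, c, ?_, hsub⟩
    intro ε hε
    obtain ⟨k, hk⟩ := exists_nat_one_div_lt hε
    exact ⟨M k, Bk k, fun j => (hBk k j).1, Set.iInter_subset _ k, (hvol k).trans hk⟩
  · have hH0 : volume H = 0 := by
      have hle : ∀ k : ℕ, volume H ≤ ENNReal.ofReal (1 / ((k : ℝ) + 1)) := by
        intro k
        calc volume H ≤ volume (⋃ j, Bk k j) := measure_mono (Set.iInter_subset _ k)
          _ ≤ ∑ j, volume (Bk k j) := measure_iUnion_fintype_le _ _
          _ ≤ ∑ j, ENNReal.ofReal (brickVol (Bk k j)) :=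
              Finset.sum_le_sum (fun j _ => brick_volume_le (hBk k j).1)
          _ = ENNReal.ofReal (∑ j, brickVol (Bk k j)) :=
              (ENNReal.ofReal_sum_of_nonneg (fun j _ => brickVol_nonneg (hBk k j).1)).symm
          _ ≤ ENNReal.ofReal (1 / ((k : ℝ) + 1)) := ENNReal.ofReal_le_ofReal (hvol k).le
      have h2 : Tendsto (fun k : ℕ => ENNReal.ofReal (1 / ((k : ℝ) + 1))) atTop (𝓝 0) := by
        have := ENNReal.tendsto_ofReal tendsto_one_div_add_atTop_nhds_zero_nat
        simpa using this
      exact le_antisymm (ge_of_tendsto' h2 hle) zero_le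
    have hhyp0 : volume (⋃ i : ℕ, {x : Fin n → ℝ | x (c i).1 = (c i).2}) = 0 :=
      measure_iUnion_null fun i => volume_hyperplane _ _
    have hD : volume {x | x ∈ Set.Icc a b ∧ ¬ ContinuousWithinAt f (Set.Icc a b) x} = 0 :=
      measure_mono_null hsub (measure_union_null hH0 hhyp0)
    rw [ae_iff]
    convert hD using 2
    ext x
    simp [Classical.not_imp, and_assoc]
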